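/- In any m-dimensional abstract rigidity matroid on K(V), for every V' ⊆ V with |V'| = m, the set bigstar(V') := K(V) \ K(V \ V') is a basis. -/

import Mathlib

open Matroid Set

/-- A circuit of a matroid: a minimal dependent set. -/
def Matroid.IsCircuit' {α : Type*} (M : Matroid α) (C : Set α) : Prop :=
  M.Dep C ∧ ∀ D, D ⊂ C → M.Indep D

/-- A cocircuit: a circuit of the dual matroid. -/
def Matroid.IsCocircuit' {α : Type*} (M : Matroid α) (C : Set α) : Prop :=
  M✶.IsCircuit' C

/-- A hyperplane: a maximal subset of the ground set not containing a basis. -/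
def Matroid.IsHyperplane {α : Type*} (M : Matroid α) (H : Set α) : Prop :=
  H ⊆ M.E ∧ (¬ ∃ B ⊆ H, M.IsBase B) ∧
    ∀ H', H ⊂ H' → H' ⊆ M.E → ∃ B ⊆ H', M.IsBase B

/-- The rank of a set: the size of a largest independent subset. -/
noncomputable def Matroid.rk {α : Type*} (M : Matroid α) (X : Set α) : ℕ :=
  sSup {n | ∃ I ⊆ X, M.Indep I ∧ I.ncard = n}

/-- `cK U` is the edge set of the complete graph on the vertex set `U`. -/
def cK {V : Type*} (U : Set V) : Set (Sym2 V) :=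
  {e | ¬ e.IsDiag ∧ ∀ v ∈ e, v ∈ U}

/-- The support (set of endpoints) of an edge set. -/
def supp {V : Type*} (E : Set (Sym2 V)) : Set V := {v | ∃ e ∈ E, v ∈ e}

/-- An edge set is rigid if its closure is the complete graph on its support. -/
def Rigid {V : Type*} (A : Matroid (Sym2 V)) (E : Set (Sym2 V)) : Prop :=
  A.closure E = cK (supp E)

/-- `A` is an `m`-dimensional abstract rigidity matroid on `K(W)`. -/
def IsARMOn {V : Type*} (m : ℕ) (W : Set V) (A : Matroid (Sym2 V)) : Prop :=
  A.E = cK W ∧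
  (∀ E F : Set (Sym2 V), E ⊆ cK W → F ⊆ cK W →
    (supp E ∩ supp F).ncard < m →
    A.closure (E ∪ F) ⊆ cK (supp E) ∪ cK (supp F)) ∧
  (∀ E F : Set (Sym2 V), E ⊆ cK W → F ⊆ cK W →
    Rigid A E → Rigid A F → m ≤ (supp E ∩ supp F).ncard →
    Rigid A (E ∪ F))

/-- The star of a vertex: all edges containing it. -/
def starv {V : Type*} (v : V) : Set (Sym2 V) := {e | ¬ e.IsDiag ∧ v ∈ e}

/-- `C` is a vertex star minus `m-1` edges. -/
def IsStarMinus {V : Type*} (m : ℕ) (C : Set (Sym2 V)) : Prop :=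
  ∃ v : V, ∃ D ⊆ starv v, D.ncard = m - 1 ∧ C = starv v \ D

/-- The valence (degree) of a vertex in an edge set. -/
noncomputable def valence {V : Type*} (C : Set (Sym2 V)) (v : V) : ℕ :=
  {e ∈ C | v ∈ e}.ncard

/-- `bigstar V' = K(V) \ K(V \ V')`. -/
def bigstar {V : Type*} (V' : Set V) : Set (Sym2 V) :=
  cK (univ : Set V) \ cK (V'ᶜ)

/-- The family `H_m(V)` of unions of two complete graphs covering `V` and
meeting in `m-1` vertices. -/
def HmFam (m : ℕ) (V : Type*) : Set (Set (Sym2 V)) :=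
  {H | ∃ V₁ V₂ : Set V, V₁ ∪ V₂ = univ ∧ (V₁ ∩ V₂).ncard = m - 1 ∧
    ¬ V₁ ⊆ V₂ ∧ ¬ V₂ ⊆ V₁ ∧ H = cK V₁ ∪ cK V₂}

/-- The family `H_m^{(1)}(K(X))` of sets `Δ_v^A` relative to a vertex set `X`. -/
def Hm1Fam {V : Type*} (m : ℕ) (X : Set V) : Set (Set (Sym2 V)) :=
  {H | ∃ v ∈ X, ∃ A ⊆ X \ {v}, A.ncard = m - 1 ∧
    H = cK ({v} ∪ A) ∪ cK (X \ {v})}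

/-! `bigstar V'` is obtained from `K(V')` by adding the vertices outside `V'` one at a time, each
joined to all of `V'`. Adding a vertex of valence at most `m` preserves independence: by the first
rigidity axiom, the closure of the old edges together with some of the new ones lies in the union of
two complete graphs sharing fewer than `m` vertices, and this union misses every further new edge.
For spanning, `bigstar V'` is the union of the rigid complete graphs on `insert u V'`, `u ∉ V'`,
any two of which share the `m` vertices of `V'`; the second axiom glues them into a rigid set whose
support is all of `V`. -/

section

variable {V : Type*}

def fan (u : V) (X : Set V) : Set (Sym2 V) := (fun x => s(u, x)) '' X

@[simp]
lemma mk_mem_cK {a b : V} {U : Set V} : s(a, b) ∈ cK U ↔ a ≠ b ∧ a ∈ U ∧ b ∈ U := by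
  simp [cK]

@[simp]
lemma mk_mem_bigstar {a b : V} {V' : Set V} :
    s(a, b) ∈ bigstar V' ↔ a ≠ b ∧ (a ∈ V' ∨ b ∈ V') := by
  simp only [bigstar, mem_sdiff, mk_mem_cK, mem_univ, mem_compl_iff, and_true, not_and, not_not]
  tauto

@[simp]
lemma mk_mem_fan {a b u : V} {X : Set V} :
    s(a, b) ∈ fan u X ↔ (a = u ∧ b ∈ X) ∨ (b = u ∧ a ∈ X) := by
  simp only [fan, mem_image, Sym2.eq, Sym2.rel_iff', Prod.mk.injEq, Prod.swap_prod_mk]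
  aesop

lemma cK_mono {U U' : Set V} (h : U ⊆ U') : cK U ⊆ cK U' :=
  fun _ he => ⟨he.1, fun v hv => h (he.2 v hv)⟩

lemma cK_empty : cK (∅ : Set V) = ∅ := by
  ext e; induction e using Sym2.ind with | _ a b => simp

lemma cK_insert {u : V} {W : Set V} (hu : u ∉ W) : cK (insert u W) = cK W ∪ fan u W := by
  ext e
  induction e using Sym2.ind with
  | _ a b => simp only [mk_mem_cK, mem_insert_iff, mem_union, mk_mem_fan]; aesop

lemma fan_subset_cK_insert {u : V} {X : Set V} (hu : u ∉ X) : fan u X ⊆ cK (insert u X) :=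
  cK_insert hu ▸ subset_union_right

lemma supp_mono {E F : Set (Sym2 V)} (h : E ⊆ F) : supp E ⊆ supp F :=
  fun _ ⟨e, he, hv⟩ => ⟨e, h he, hv⟩

lemma supp_empty : supp (∅ : Set (Sym2 V)) = ∅ := by
  simp [supp]

lemma supp_subset_of_subset_cK {E : Set (Sym2 V)} {U : Set V} (h : E ⊆ cK U) :
    supp E ⊆ U :=
  fun v ⟨_, he, hv⟩ => (h he).2 v hv

lemma supp_fan_subset (u : V) (X : Set V) : supp (fan u X) ⊆ insert u X := by
  rintro v ⟨_, ⟨x, hx, rfl⟩, hv⟩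
  rcases Sym2.mem_iff.1 hv with rfl | rfl
  exacts [mem_insert _ _, mem_insert_of_mem _ hx]

lemma subset_supp_cK_insert {u : V} {W : Set V} (hu : u ∉ W) : W ⊆ supp (cK (insert u W)) :=
  fun x hx => ⟨s(x, u), by simp [hx, ne_of_mem_of_not_mem hx hu], Sym2.mem_mk_left x u⟩

lemma bigstar_eq_cK_union_biUnion_fan (V' : Set V) :
    bigstar V' = cK V' ∪ ⋃ u ∈ V'ᶜ, fan u V' := by
  ext e; induction e using Sym2.ind with | _ a b => ?_
  rcases eq_or_ne a b with rfl | hab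
  · simp
  by_cases ha : a ∈ V' <;> by_cases hb : b ∈ V' <;> simp [ha, hb, hab]

lemma bigstar_eq_biUnion_cK_insert {V' : Set V} (h : V'ᶜ.Nonempty) :
    bigstar V' = ⋃ u ∈ V'ᶜ, cK (insert u V') := by
  ext e; induction e using Sym2.ind with | _ a b => ?_
  rcases eq_or_ne a b with rfl | hab
  · simp
  by_cases ha : a ∈ V' <;> by_cases hb : b ∈ V' <;> simp [ha, hb, hab, hab.symm]
  exact h

lemma supp_bigstar {V' : Set V} (h : V'.Nonempty) (hc : V'ᶜ.Nonempty) :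
    supp (bigstar V') = univ := by
  obtain ⟨x, hx⟩ := h
  obtain ⟨u, hu⟩ := hc
  refine eq_univ_of_forall fun v => ?_
  by_cases hv : v ∈ V'
  · exact ⟨s(v, u), by simp [hv, ne_of_mem_of_not_mem hv hu], Sym2.mem_mk_left v u⟩
  · exact ⟨s(v, x), by simp [hx, (ne_of_mem_of_not_mem hx hv).symm], Sym2.mem_mk_left v x⟩

namespace IsARMOn

variable {m : ℕ} {A : Matroid (Sym2 V)}

lemma closure_union_subset (hA : IsARMOn m univ A) {E F : Set (Sym2 V)}
    (hE : E ⊆ cK univ) (hF : F ⊆ cK univ) (h : (supp E ∩ supp F).ncard < m) :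
    A.closure (E ∪ F) ⊆ cK (supp E) ∪ cK (supp F) :=
  hA.2.1 E F hE hF h

lemma rigid_union (hA : IsARMOn m univ A) {E F : Set (Sym2 V)}
    (hE : E ⊆ cK univ) (hF : F ⊆ cK univ) (hEr : Rigid A E) (hFr : Rigid A F)
    (h : m ≤ (supp E ∩ supp F).ncard) : Rigid A (E ∪ F) :=
  hA.2.2 E F hE hF hEr hFr h

lemma closure_subset_cK_supp (hA : IsARMOn m univ A) (hm : 0 < m) {E : Set (Sym2 V)}
    (hE : E ⊆ cK univ) : A.closure E ⊆ cK (supp E) := by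
  simpa [supp_empty, cK_empty] using
    hA.closure_union_subset hE (empty_subset _) (by simpa [supp_empty] using hm)

lemma rigid_cK (hA : IsARMOn m univ A) (hm : 0 < m) (U : Set V) : Rigid A (cK U) := by
  refine (hA.closure_subset_cK_supp hm (cK_mono (subset_univ U))).antisymm ?_
  exact (cK_mono (supp_subset_of_subset_cK subset_rfl)).trans
    (A.subset_closure _ (hA.1 ▸ cK_mono (subset_univ U)))

lemma indep_union_fan (hA : IsARMOn m univ A) {I : Set (Sym2 V)} (hI : A.Indep I) {u : V}
    (hu : u ∉ supp I) {X : Set V} (hX : X.Finite) (huX : u ∉ X) (hXm : X.ncard ≤ m) :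
    A.Indep (I ∪ fan u X) := by
  induction X, hX using Set.Finite.induction_on with
  | empty => simpa [fan] using hI
  | @insert x X hxX hX ih =>
    have hux : u ≠ x := fun h => huX (h ▸ mem_insert _ _)
    have huX' : u ∉ X := fun h => huX (mem_insert_of_mem _ h)
    have hXm' : X.ncard < m := by rw [ncard_insert_of_notMem hxX hX] at hXm; omega
    rw [fan, image_insert_eq, ← fan, union_insert]
    refine (ih huX' hXm'.le).insert_indep_iff.2 (Or.inl ⟨hA.1 ▸ by simp [hux], fun hcl => ?_⟩)
    have hIE : I ⊆ cK univ := hA.1 ▸ hI.subset_ground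
    have hDE : fan u X ⊆ cK univ := (fan_subset_cK_insert huX').trans (cK_mono (subset_univ _))
    have hsupp : supp I ∩ supp (fan u X) ⊆ X := by
      rintro v ⟨hvI, hvD⟩
      rcases supp_fan_subset u X hvD with rfl | hv
      exacts [absurd hvI hu, hv]
    rcases hA.closure_union_subset hIE hDE ((ncard_le_ncard hsupp hX).trans_lt hXm') hcl with h | h
    · exact hu (mk_mem_cK.1 h).2.1
    · rcases supp_fan_subset u X (mk_mem_cK.1 h).2.2 with rfl | hx
      exacts [hux rfl, hxX hx]

lemma indep_cK (hA : IsARMOn m univ A) {W : Set V} (hW : W.Finite) (hWm : W.ncard ≤ m + 1) :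
    A.Indep (cK W) := by
  induction W, hW using Set.Finite.induction_on with
  | empty => simp [cK_empty]
  | @insert u W huW hW ih =>
    rw [ncard_insert_of_notMem huW hW] at hWm
    rw [cK_insert huW]
    exact hA.indep_union_fan (ih (by omega)) (fun h => huW (supp_subset_of_subset_cK subset_rfl h))
      hW huW (by omega)

variable [Finite V]

lemma indep_bigstar (hA : IsARMOn m univ A) {V' : Set V} (hV' : V'.ncard ≤ m) :
    A.Indep (bigstar V') := by
  rw [bigstar_eq_cK_union_biUnion_fan]
  refine Set.Finite.induction_on_subset
    (motive := fun T _ => A.Indep (cK V' ∪ ⋃ u ∈ T, fan u V')) V'ᶜ (toFinite _)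
    (by simpa using hA.indep_cK (toFinite V') (by omega)) ?_
  intro u T hu hT huT ih
  rw [biUnion_insert, union_left_comm, union_comm]
  have hsub : cK V' ∪ ⋃ w ∈ T, fan w V' ⊆ cK (V' ∪ T) :=
    union_subset (cK_mono subset_union_left) (iUnion₂_subset fun w hw =>
      (fan_subset_cK_insert (hT hw)).trans
        (cK_mono (insert_subset (mem_union_right _ hw) subset_union_left)))
  refine hA.indep_union_fan ih (fun h => ?_) (toFinite V') hu hV'
  rcases supp_subset_of_subset_cK hsub h with h | h
  exacts [hu h, huT h]

lemma rigid_biUnion (hA : IsARMOn m univ A) {ι : Type*} {s : Set ι} (hs : s.Finite)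
    (hne : s.Nonempty) {F : ι → Set (Sym2 V)} (hFE : ∀ i ∈ s, F i ⊆ cK univ)
    (hFr : ∀ i ∈ s, Rigid A (F i)) {W : Set V} (hW : ∀ i ∈ s, W ⊆ supp (F i))
    (hWm : m ≤ W.ncard) : Rigid A (⋃ i ∈ s, F i) := by
  obtain ⟨a, ha⟩ := hne
  rw [← insert_eq_of_mem ha, biUnion_insert]
  refine Set.Finite.induction_on_subset (motive := fun t _ => Rigid A (F a ∪ ⋃ i ∈ t, F i))
    s hs (by simpa using hFr a ha) ?_
  intro i t hi hts _ ih
  rw [biUnion_insert, union_left_comm, union_comm]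
  refine hA.rigid_union (union_subset (hFE a ha) (iUnion₂_subset fun j hj => hFE j (hts hj)))
    (hFE i hi) ih (hFr i hi) ?_
  exact hWm.trans (ncard_le_ncard (subset_inter ((hW a ha).trans (supp_mono subset_union_left))
    (hW i hi)))

lemma closure_bigstar (hA : IsARMOn m univ A) (hm : 0 < m) {V' : Set V} (hV' : m ≤ V'.ncard)
    (hc : V'ᶜ.Nonempty) : A.closure (bigstar V') = cK univ := by
  have hrigid : Rigid A (bigstar V') := by
    rw [bigstar_eq_biUnion_cK_insert hc]
    exact hA.rigid_biUnion (toFinite _) hc (fun _ _ => cK_mono (subset_univ _))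
      (fun _ _ => hA.rigid_cK hm _) (fun _ hu => subset_supp_cK_insert hu) hV'
  rw [← supp_bigstar (nonempty_of_ncard_ne_zero (by omega)) hc]
  exact hrigid

end IsARMOn

end

theorem stmt_10_general {V : Type*} [Fintype V] (m : ℕ) (hm : 0 < m)
    (A : Matroid (Sym2 V)) (hA : IsARMOn m (univ : Set V) A)
    (hV : m + 1 ≤ Fintype.card V)
    (V' : Set V) (hV' : V'.ncard = m) :
    A.IsBase (bigstar V') := by
  have hc : V'ᶜ.Nonempty := by
    rw [nonempty_compl]
    rintro rfl
    rw [ncard_univ, Nat.card_eq_fintype_card] at hV'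
    omega
  refine isBase_iff_indep_closure_eq.2 ⟨hA.indep_bigstar hV'.le, ?_⟩
  rw [hA.closure_bigstar hm hV'.ge hc, hA.1]

theorem stmt_10 {V : Type*} [Fintype V] [DecidableEq V] (m : ℕ) (hm : 0 < m)
    (A : Matroid (Sym2 V)) (hA : IsARMOn m (univ : Set V) A)
    (hV : m + 1 ≤ Fintype.card V)
    (V' : Set V) (hV' : V'.ncard = m) :
    A.IsBase (bigstar V') :=
  stmt_10_general m hm A hA hV V' hV'
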